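/- Under the stopped-process convention, if P(F_t = 1 | A_t) ≤ q̄_t and P(S_t = 1 | A_t) ≥ h̲_t for all t ≤ T (with A_t the active event and zero-probability conditioning evaluated as 0), and P(A_1) = 1, then P(τ_S ≤ T, τ_S < τ_F) ≥ max(0, ∏_{t=1}^T (1 - q̄_t) − ∏_{t=1}^T (1 - h̲_t)). -/

import Mathlib

open MeasureTheory Finset

/-- First hit time `inf {t ∈ {1,…,T} : ω ∈ S t}` in `ℕ∞`, with `inf ∅ = ∞`. -/
noncomputable def hitTime {Ω : Type*} (T : ℕ) (S : ℕ → Set Ω) (ω : Ω) : ℕ∞ :=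
  sInf {n : ℕ∞ | ∃ t : ℕ, n = (t : ℕ∞) ∧ t ∈ Finset.Icc 1 T ∧ ω ∈ S t}

/-- Active event `A_t = {τ_S > t-1, τ_F > t-1}`: no success and no false admission among
steps `1, …, t-1`. -/
def activeSet {Ω : Type*} (S F : ℕ → Set Ω) (t : ℕ) : Set Ω :=
  ⋂ s ∈ Finset.Icc 1 (t - 1), ((S s)ᶜ ∩ (F s)ᶜ)

/-- Conditional probability `P(E | A)`, with zero-probability conditioning evaluated as `0`. -/
noncomputable def condP {Ω : Type*} [MeasurableSpace Ω] (μ : Measure Ω) (E A : Set Ω) : ℝ :=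
  if μ A = 0 then 0 else (μ (E ∩ A)).toReal / (μ A).toReal

lemma seqAux (a s f q h : ℕ → ℝ) (T : ℕ)
    (hrec : ∀ t ∈ Finset.Icc 1 T, a (t + 1) = a t - s t - f t)
    (hs0 : ∀ t ∈ Finset.Icc 1 T, 0 ≤ s t)
    (hf0 : ∀ t ∈ Finset.Icc 1 T, 0 ≤ f t)
    (hfq : ∀ t ∈ Finset.Icc 1 T, f t ≤ q t * a t)
    (hsh : ∀ t ∈ Finset.Icc 1 T, h t * a t ≤ s t)
    (hq : ∀ t ∈ Finset.Icc 1 T, 0 ≤ q t ∧ q t ≤ 1)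
    (hh : ∀ t ∈ Finset.Icc 1 T, 0 ≤ h t ∧ h t ≤ 1)
    (ha0 : ∀ t, 0 ≤ a t) :
    a 1 * ∏ t ∈ Finset.Icc 1 T, (1 - q t) ≤ a (T + 1) + ∑ t ∈ Finset.Icc 1 T, s t ∧
      a (T + 1) ≤ a 1 * ∏ t ∈ Finset.Icc 1 T, (1 - h t) := by
  induction T with
  | zero => simp
  | succ T ih =>
    have hmem : ∀ t ∈ Finset.Icc 1 T, t ∈ Finset.Icc 1 (T + 1) := by
      intro t ht
      simp only [Finset.mem_Icc] at *
      omega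
    obtain ⟨ihA, ihB⟩ := ih (fun t ht => hrec t (hmem t ht)) (fun t ht => hs0 t (hmem t ht))
      (fun t ht => hf0 t (hmem t ht)) (fun t ht => hfq t (hmem t ht))
      (fun t ht => hsh t (hmem t ht)) (fun t ht => hq t (hmem t ht))
      (fun t ht => hh t (hmem t ht))
    have hT1 : T + 1 ∈ Finset.Icc 1 (T + 1) := by simp
    have hq1 := hq _ hT1
    have hh1 := hh _ hT1
    have hrec1 := hrec _ hT1
    have hfq1 := hfq _ hT1
    have hsh1 := hsh _ hT1
    have hf01 := hf0 _ hT1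
    have hs01 := hs0 _ hT1
    have hprodq : 0 ≤ ∏ t ∈ Finset.Icc 1 T, (1 - q t) :=
      Finset.prod_nonneg fun t ht => by linarith [(hq t (hmem t ht)).2]
    have hprodh : 0 ≤ ∏ t ∈ Finset.Icc 1 T, (1 - h t) :=
      Finset.prod_nonneg fun t ht => by linarith [(hh t (hmem t ht)).2]
    have hsum0 : 0 ≤ ∑ t ∈ Finset.Icc 1 T, s t :=
      Finset.sum_nonneg fun t ht => hs0 t (hmem t ht)
    rw [Finset.prod_Icc_succ_top (by omega : 1 ≤ T + 1),
      Finset.prod_Icc_succ_top (by omega : 1 ≤ T + 1),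
      Finset.sum_Icc_succ_top (by omega : 1 ≤ T + 1)]
    have haT1 := ha0 (T + 1)
    constructor
    · nlinarith [mul_le_mul_of_nonneg_right ihA (by linarith [hq1.2] : (0:ℝ) ≤ 1 - q (T + 1)),
        mul_nonneg hsum0 hq1.1]
    · nlinarith [mul_le_mul_of_nonneg_right ihB (by linarith [hh1.2] : (0:ℝ) ≤ 1 - h (T + 1))]

/-- Stopped clean-before-false certificate: under the stopped-process convention, if
`P(F_t = 1 | A_t) ≤ q̄_t` and `P(S_t = 1 | A_t) ≥ h̲_t` for all `t ≤ T` (zero-probability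
conditioning evaluated as `0`) and `P(A_1) = 1`, then
`P(τ_S ≤ T, τ_S < τ_F) ≥ max(0, ∏_{t=1}^T (1 - q̄_t) − ∏_{t=1}^T (1 - h̲_t))`. -/
theorem stmt4 {Ω : Type*} [MeasurableSpace Ω] (μ : Measure Ω) [IsProbabilityMeasure μ]
    (T : ℕ) (S F : ℕ → Set Ω)
    (hSm : ∀ t, MeasurableSet (S t)) (hFm : ∀ t, MeasurableSet (F t))
    (hdisj : ∀ t, Disjoint (S t) (F t))
    (hstop : ∀ t t' : ℕ, t < t' → ∀ ω : Ω, ω ∈ S t ∪ F t → ω ∉ S t' ∪ F t')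
    (hA1 : μ (activeSet S F 1) = 1)
    (q h : ℕ → ℝ)
    (hq : ∀ t ∈ Finset.Icc 1 T, 0 ≤ q t ∧ q t ≤ 1)
    (hh : ∀ t ∈ Finset.Icc 1 T, 0 ≤ h t ∧ h t ≤ 1)
    (hcondF : ∀ t ∈ Finset.Icc 1 T, condP μ (F t) (activeSet S F t) ≤ q t)
    (hcondS : ∀ t ∈ Finset.Icc 1 T, h t ≤ condP μ (S t) (activeSet S F t)) :
    max 0 ((∏ t ∈ Finset.Icc 1 T, (1 - q t)) - ∏ t ∈ Finset.Icc 1 T, (1 - h t)) ≤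
      (μ {ω | hitTime T S ω ≤ (T : ℕ∞) ∧ hitTime T S ω < hitTime T F ω}).toReal := by
  set A : ℕ → Set Ω := activeSet S F with hA
  -- basic facts
  have hAm : ∀ t, MeasurableSet (A t) := by
    intro t
    exact Finset.measurableSet_biInter _ fun s _ => ((hSm s).compl.inter (hFm s).compl)
  have hSsub : ∀ t, 1 ≤ t → S t ⊆ A t := by
    intro t ht ω hω
    simp only [hA, activeSet, Set.mem_iInter, Finset.mem_Icc]
    rintro s ⟨hs1, hs2⟩
    constructor
    · intro hωs
      exact hstop s t (by omega) ω (Or.inl hωs) (Or.inl hω)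
    · intro hωf
      exact hstop s t (by omega) ω (Or.inr hωf) (Or.inl hω)
  have hFsub : ∀ t, 1 ≤ t → F t ⊆ A t := by
    intro t ht ω hω
    simp only [hA, activeSet, Set.mem_iInter, Finset.mem_Icc]
    rintro s ⟨hs1, hs2⟩
    constructor
    · intro hωs
      exact hstop s t (by omega) ω (Or.inl hωs) (Or.inr hω)
    · intro hωf
      exact hstop s t (by omega) ω (Or.inr hωf) (Or.inr hω)
  have hAsucc : ∀ t, 1 ≤ t → A (t + 1) = A t ∩ ((S t)ᶜ ∩ (F t)ᶜ) := by
    intro t ht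
    simp only [hA, activeSet]
    ext ω
    simp only [Set.mem_inter_iff, Set.mem_iInter, Finset.mem_Icc, Set.mem_compl_iff]
    constructor
    · intro H
      exact ⟨fun s hs => H s ⟨hs.1, by omega⟩, H t ⟨ht, by omega⟩⟩
    · rintro ⟨H1, H2⟩ s hs
      rcases eq_or_ne s t with rfl | hne
      · exact H2
      · exact H1 s ⟨hs.1, by omega⟩
  -- real-valued sequences
  set a : ℕ → ℝ := fun t => (μ (A t)).toReal with ha
  set sv : ℕ → ℝ := fun t => (μ (S t)).toReal with hsv
  set fv : ℕ → ℝ := fun t => (μ (F t)).toReal with hfv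
  have hrec : ∀ t ∈ Finset.Icc 1 T, a (t + 1) = a t - sv t - fv t := by
    intro t ht
    have ht1 : 1 ≤ t := (Finset.mem_Icc.mp ht).1
    have hsplit : A t = (A (t + 1) ∪ S t) ∪ F t := by
      rw [hAsucc t ht1]
      ext ω
      constructor
      · intro hω
        by_cases hs : ω ∈ S t
        · exact Or.inl (Or.inr hs)
        · by_cases hf : ω ∈ F t
          · exact Or.inr hf
          · exact Or.inl (Or.inl ⟨hω, hs, hf⟩)
      · rintro ((hω | hω) | hω)
        · exact hω.1
        · exact hSsub t ht1 hω
        · exact hFsub t ht1 hω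
    have hd1 : Disjoint (A (t + 1)) (S t) := by
      rw [hAsucc t ht1]
      exact Set.disjoint_left.mpr fun ω hω hs => hω.2.1 hs
    have hd2 : Disjoint (A (t + 1) ∪ S t) (F t) := by
      rw [hAsucc t ht1]
      refine Set.disjoint_union_left.mpr ⟨Set.disjoint_left.mpr fun ω hω hf => hω.2.2 hf, hdisj t⟩
    have hmeas : μ (A t) = μ (A (t + 1)) + μ (S t) + μ (F t) := by
      rw [hsplit, measure_union hd2 (hFm t), measure_union hd1 (hSm t)]
    have h1 : a t = a (t + 1) + sv t + fv t := by
      simp only [ha, hsv, hfv, hmeas]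
      rw [ENNReal.toReal_add (by finiteness) (by finiteness),
        ENNReal.toReal_add (by finiteness) (by finiteness)]
    linarith
  have hs0 : ∀ t ∈ Finset.Icc 1 T, 0 ≤ sv t := fun t _ => ENNReal.toReal_nonneg
  have hf0 : ∀ t ∈ Finset.Icc 1 T, 0 ≤ fv t := fun t _ => ENNReal.toReal_nonneg
  have ha0 : ∀ t, 0 ≤ a t := fun t => ENNReal.toReal_nonneg
  have hfq : ∀ t ∈ Finset.Icc 1 T, fv t ≤ q t * a t := by
    intro t ht
    have ht1 : 1 ≤ t := (Finset.mem_Icc.mp ht).1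
    have hc := hcondF t ht
    by_cases h0 : μ (A t) = 0
    · have : μ (F t) = 0 := le_antisymm (h0 ▸ measure_mono (hFsub t ht1)) zero_le
      simp only [hfv, ha, this, h0, ENNReal.toReal_zero, mul_zero, le_refl]
    · rw [condP, if_neg h0, Set.inter_eq_left.mpr (hFsub t ht1)] at hc
      have hpos : 0 < a t := ENNReal.toReal_pos h0 (by finiteness)
      rw [div_le_iff₀ hpos] at hc
      exact hc
  have hsh : ∀ t ∈ Finset.Icc 1 T, h t * a t ≤ sv t := by
    intro t ht
    have ht1 : 1 ≤ t := (Finset.mem_Icc.mp ht).1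
    have hc := hcondS t ht
    by_cases h0 : μ (A t) = 0
    · have ha0' : a t = 0 := by simp [ha, h0]
      rw [ha0', mul_zero]
      exact ENNReal.toReal_nonneg
    · rw [condP, if_neg h0, Set.inter_eq_left.mpr (hSsub t ht1)] at hc
      have hpos : 0 < a t := ENNReal.toReal_pos h0 (by finiteness)
      rw [le_div_iff₀ hpos] at hc
      exact hc
  have ha1 : a 1 = 1 := by simp [ha, hA1]
  obtain ⟨key1, key2⟩ := seqAux a sv fv q h T hrec hs0 hf0 hfq hsh hq hh ha0
  -- the target event contains the disjoint union of the S t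
  have hG : (⋃ t ∈ Finset.Icc 1 T, S t) ⊆
      {ω | hitTime T S ω ≤ (T : ℕ∞) ∧ hitTime T S ω < hitTime T F ω} := by
    intro ω hω
    simp only [Set.mem_iUnion] at hω
    obtain ⟨t, ht, hωt⟩ := hω
    have htIcc := Finset.mem_Icc.mp ht
    have hSle : hitTime T S ω ≤ (t : ℕ∞) := sInf_le ⟨t, rfl, ht, hωt⟩
    have hSleT : hitTime T S ω ≤ (T : ℕ∞) :=
      hSle.trans (by exact_mod_cast htIcc.2)
    have hFtop : hitTime T F ω = ⊤ := by
      rw [hitTime]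
      refine (congrArg sInf ?_).trans sInf_empty
      rw [Set.eq_empty_iff_forall_notMem]
      rintro n ⟨s, rfl, hs, hωs⟩
      have hsIcc := Finset.mem_Icc.mp hs
      rcases lt_trichotomy s t with hlt | heq | hgt
      · exact hstop s t hlt ω (Or.inr hωs) (Or.inl hωt)
      · subst heq
        exact Set.disjoint_left.mp (hdisj s) hωt hωs
      · exact hstop t s hgt ω (Or.inl hωt) (Or.inr hωs)
    refine ⟨hSleT, ?_⟩
    rw [hFtop]
    exact lt_of_le_of_lt hSleT (ENat.coe_lt_top T)
  have hSdisj : (↑(Finset.Icc 1 T) : Set ℕ).PairwiseDisjoint S := by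
    intro t _ t' _ hne
    rcases lt_or_gt_of_ne hne with hlt | hgt
    · exact Set.disjoint_left.mpr fun ω hω hω' => hstop t t' hlt ω (Or.inl hω) (Or.inl hω')
    · exact Set.disjoint_left.mpr fun ω hω hω' => hstop t' t hgt ω (Or.inl hω') (Or.inl hω)
  have hsum : μ (⋃ t ∈ Finset.Icc 1 T, S t) = ∑ t ∈ Finset.Icc 1 T, μ (S t) :=
    measure_biUnion_finset (μ := μ) hSdisj fun t _ => hSm t
  have hμG : ∑ t ∈ Finset.Icc 1 T, sv t ≤
      (μ {ω | hitTime T S ω ≤ (T : ℕ∞) ∧ hitTime T S ω < hitTime T F ω}).toReal := by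
    have := measure_mono (μ := μ) hG
    rw [hsum] at this
    calc ∑ t ∈ Finset.Icc 1 T, sv t
        = (∑ t ∈ Finset.Icc 1 T, μ (S t)).toReal := by
          rw [ENNReal.toReal_sum fun t _ => by finiteness]
      _ ≤ _ := ENNReal.toReal_mono (by finiteness) this
  refine max_le ?_ ?_
  · exact le_trans (Finset.sum_nonneg hs0) hμG
  · rw [ha1] at key1 key2
    linarith
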